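/- arXiv:2307.03914 — 2 statements merged into one kernel-verified Lean document; each statement's English description precedes it below -/
import Mathlib

section
/- Rigal–Gaches theorem: for a computed matrix-vector product ŷ ≈ Ax with x ≠ 0 and y = Ax, the smallest ε such that ŷ = (A + ΔA)x for some perturbation with ‖ΔA‖₂ ≤ ε‖A‖₂ equals ‖ŷ − Ax‖₂ / (‖A‖₂ ‖x‖₂). -/
/-- The Euclidean 2-norm of a vector. -/
noncomputable def norm2 {n : ℕ} (x : Fin n → ℝ) : ℝ :=
  Real.sqrt (∑ i, x i ^ 2)

/-- The spectral norm (2-norm induced operator norm) of a matrix. -/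
noncomputable def opNorm2 {m n : ℕ} (A : Matrix (Fin m) (Fin n) ℝ) : ℝ :=
  sSup {c : ℝ | ∃ x : Fin n → ℝ, norm2 x = 1 ∧ c = norm2 (A.mulVec x)}

lemma norm2_nonneg {n : ℕ} (x : Fin n → ℝ) : 0 ≤ norm2 x := Real.sqrt_nonneg _

lemma sum_sq_nonneg' {n : ℕ} (x : Fin n → ℝ) : 0 ≤ ∑ i, x i ^ 2 :=
  Finset.sum_nonneg fun i _ => sq_nonneg _

lemma norm2_sq {n : ℕ} (x : Fin n → ℝ) : norm2 x ^ 2 = ∑ i, x i ^ 2 :=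
  Real.sq_sqrt (sum_sq_nonneg' x)

lemma norm2_pos {n : ℕ} {x : Fin n → ℝ} (hx : x ≠ 0) : 0 < norm2 x := by
  obtain ⟨j, hj⟩ := Function.ne_iff.mp hx
  apply Real.sqrt_pos.mpr
  have h1 : 0 < x j ^ 2 := by
    have := sq_abs (x j)
    nlinarith [abs_pos.mpr hj]
  exact lt_of_lt_of_le h1
    (Finset.single_le_sum (fun i _ => sq_nonneg (x i)) (Finset.mem_univ j))

lemma sum_sq_pos {n : ℕ} {x : Fin n → ℝ} (hx : x ≠ 0) : 0 < ∑ i, x i ^ 2 := by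
  have := norm2_pos hx
  nlinarith [norm2_sq x]

lemma norm2_smul {n : ℕ} (c : ℝ) (x : Fin n → ℝ) :
    norm2 (c • x) = |c| * norm2 x := by
  unfold norm2
  have : ∑ i, (c • x) i ^ 2 = c ^ 2 * ∑ i, x i ^ 2 := by
    rw [Finset.mul_sum]; apply Finset.sum_congr rfl; intro i _
    simp [Pi.smul_apply, smul_eq_mul]; ring
  rw [this, Real.sqrt_mul (sq_nonneg c), Real.sqrt_sq_eq_abs]

/-- Cauchy–Schwarz. -/
lemma abs_dot_le {n : ℕ} (x u : Fin n → ℝ) :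
    |∑ i, x i * u i| ≤ norm2 x * norm2 u := by
  have h := Finset.sum_mul_sq_le_sq_mul_sq Finset.univ x u
  have h2 : |∑ i, x i * u i| = Real.sqrt ((∑ i, x i * u i) ^ 2) :=
    (Real.sqrt_sq_eq_abs _).symm
  rw [h2]
  calc Real.sqrt ((∑ i, x i * u i) ^ 2)
      ≤ Real.sqrt ((∑ i, x i ^ 2) * ∑ i, u i ^ 2) := Real.sqrt_le_sqrt h
    _ = norm2 x * norm2 u := by
        rw [Real.sqrt_mul (sum_sq_nonneg' x)]; rfl

lemma bddAbove_S {m n : ℕ} (A : Matrix (Fin m) (Fin n) ℝ) :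
    BddAbove {c : ℝ | ∃ x : Fin n → ℝ, norm2 x = 1 ∧ c = norm2 (A.mulVec x)} := by
  refine ⟨Real.sqrt (∑ i, ∑ j, A i j ^ 2), ?_⟩
  rintro c ⟨u, hu, rfl⟩
  have hu2 : ∑ j, u j ^ 2 = 1 := by
    have := norm2_sq u; rw [hu] at this; simpa using this.symm
  unfold norm2
  apply Real.sqrt_le_sqrt
  apply Finset.sum_le_sum
  intro i _
  have h := Finset.sum_mul_sq_le_sq_mul_sq Finset.univ (fun j => A i j) u
  calc A.mulVec u i ^ 2 = (∑ j, A i j * u j) ^ 2 := by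
        simp [Matrix.mulVec, dotProduct]
    _ ≤ (∑ j, A i j ^ 2) * (∑ j, u j ^ 2) := h
    _ = ∑ j, A i j ^ 2 := by rw [hu2, mul_one]

lemma S_nonempty {m n : ℕ} (A : Matrix (Fin m) (Fin n) ℝ) {x : Fin n → ℝ} (hx : x ≠ 0) :
    Set.Nonempty {c : ℝ | ∃ u : Fin n → ℝ, norm2 u = 1 ∧ c = norm2 (A.mulVec u)} := by
  refine ⟨norm2 (A.mulVec ((norm2 x)⁻¹ • x)), (norm2 x)⁻¹ • x, ?_, rfl⟩
  rw [norm2_smul, abs_of_nonneg (inv_nonneg.mpr (norm2_nonneg x)),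
    inv_mul_cancel₀ (ne_of_gt (norm2_pos hx))]

lemma opNorm2_nonneg {m n : ℕ} (A : Matrix (Fin m) (Fin n) ℝ) {x : Fin n → ℝ} (hx : x ≠ 0) :
    0 ≤ opNorm2 A := by
  obtain ⟨c, u, hu, rfl⟩ := S_nonempty A hx
  exact le_trans (norm2_nonneg _) (le_csSup (bddAbove_S A) ⟨u, hu, rfl⟩)

lemma norm2_mulVec_le {m n : ℕ} (A : Matrix (Fin m) (Fin n) ℝ) (x : Fin n → ℝ) (hx : x ≠ 0) :
    norm2 (A.mulVec x) ≤ opNorm2 A * norm2 x := by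
  have hpos := norm2_pos hx
  have key : norm2 (A.mulVec ((norm2 x)⁻¹ • x)) ≤ opNorm2 A := by
    apply le_csSup (bddAbove_S A)
    refine ⟨(norm2 x)⁻¹ • x, ?_, rfl⟩
    rw [norm2_smul, abs_of_nonneg (inv_nonneg.mpr (norm2_nonneg x)),
      inv_mul_cancel₀ (ne_of_gt hpos)]
  rw [Matrix.mulVec_smul, norm2_smul, abs_of_nonneg (inv_nonneg.mpr (norm2_nonneg x))] at key
  calc norm2 (A.mulVec x) = (norm2 x)⁻¹ * norm2 (A.mulVec x) * norm2 x := by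
        field_simp
    _ ≤ opNorm2 A * norm2 x := by
        apply mul_le_mul_of_nonneg_right key (norm2_nonneg x)

lemma opNorm2_pos {m n : ℕ} {A : Matrix (Fin m) (Fin n) ℝ} (hA : A ≠ 0) :
    0 < opNorm2 A := by
  have : ∃ i j, A i j ≠ 0 := by
    by_contra h
    push_neg at h
    exact hA (by ext i j; exact h i j)
  obtain ⟨i, j, hij⟩ := this
  have hmem : norm2 (A.mulVec (Pi.single j 1)) ∈
      {c : ℝ | ∃ u : Fin n → ℝ, norm2 u = 1 ∧ c = norm2 (A.mulVec u)} := by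
    refine ⟨Pi.single j 1, ?_, rfl⟩
    unfold norm2
    have : ∑ k, (Pi.single j 1 : Fin n → ℝ) k ^ 2 = 1 := by
      rw [Finset.sum_eq_single j]
      · simp
      · intro k _ hk; simp [Pi.single_apply, hk]
      · simp
    rw [this, Real.sqrt_one]
  have hlow : 0 < norm2 (A.mulVec (Pi.single j 1)) := by
    apply norm2_pos
    intro h
    apply hij
    have := congrFun h i
    simpa [Matrix.mulVec_single] using this
  exact lt_of_lt_of_le hlow (le_csSup (bddAbove_S A) hmem)

lemma rankone_mulVec {m n : ℕ} (r : Fin m → ℝ) (x u : Fin n → ℝ) :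
    (Matrix.of fun i j => (∑ k, x k ^ 2)⁻¹ * r i * x j : Matrix (Fin m) (Fin n) ℝ).mulVec u
      = ((∑ k, x k ^ 2)⁻¹ * ∑ j, x j * u j) • r := by
  funext i
  simp only [Matrix.mulVec, dotProduct, Matrix.of_apply, Pi.smul_apply, smul_eq_mul]
  rw [Finset.mul_sum, Finset.sum_mul]
  exact Finset.sum_congr rfl fun j _ => by ring

lemma rankone_opNorm_le {m n : ℕ} (r : Fin m → ℝ) {x : Fin n → ℝ} (hx : x ≠ 0) :
    opNorm2 (Matrix.of fun i j => (∑ k, x k ^ 2)⁻¹ * r i * x j : Matrix (Fin m) (Fin n) ℝ)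
      ≤ norm2 r / norm2 x := by
  apply csSup_le (S_nonempty _ hx)
  rintro c ⟨u, hu, rfl⟩
  rw [rankone_mulVec, norm2_smul, abs_mul, abs_of_nonneg (inv_nonneg.mpr (sum_sq_nonneg' x))]
  have hcs : |∑ j, x j * u j| ≤ norm2 x * norm2 u := abs_dot_le x u
  rw [hu, mul_one] at hcs
  have hxpos := norm2_pos hx
  have hsum : (∑ k, x k ^ 2) = norm2 x ^ 2 := (norm2_sq x).symm
  rw [hsum]
  calc (norm2 x ^ 2)⁻¹ * |∑ j, x j * u j| * norm2 r
      ≤ (norm2 x ^ 2)⁻¹ * norm2 x * norm2 r := by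
        apply mul_le_mul_of_nonneg_right _ (norm2_nonneg r)
        exact mul_le_mul_of_nonneg_left hcs (by positivity)
    _ = norm2 r / norm2 x := by field_simp

/-- Rigal–Gaches theorem: the smallest `ε ≥ 0` such that `ŷ = (A + ΔA)x` for some
perturbation with `‖ΔA‖₂ ≤ ε‖A‖₂` equals `‖ŷ − Ax‖₂ / (‖A‖₂‖x‖₂)`. -/
theorem rigal_gaches (m n : ℕ) (A : Matrix (Fin m) (Fin n) ℝ)
    (x : Fin n → ℝ) (yhat : Fin m → ℝ) (hx : x ≠ 0) (hA : A ≠ 0) :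
    IsLeast {ε : ℝ | 0 ≤ ε ∧ ∃ ΔA : Matrix (Fin m) (Fin n) ℝ,
        yhat = (A + ΔA).mulVec x ∧ opNorm2 ΔA ≤ ε * opNorm2 A}
      (norm2 (yhat - A.mulVec x) / (opNorm2 A * norm2 x)) := by
  set r := yhat - A.mulVec x with hr
  have hApos := opNorm2_pos hA
  have hxpos := norm2_pos hx
  have hsumpos := sum_sq_pos hx
  constructor
  · refine ⟨div_nonneg (norm2_nonneg _) (mul_pos hApos hxpos).le,
      Matrix.of fun i j => (∑ k, x k ^ 2)⁻¹ * r i * x j, ?_, ?_⟩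
    · rw [Matrix.add_mulVec, rankone_mulVec]
      have hdot : ∑ j, x j * x j = ∑ k, x k ^ 2 := by
        apply Finset.sum_congr rfl; intro j _; ring
      rw [hdot, inv_mul_cancel₀ (ne_of_gt hsumpos), one_smul]
      simp [hr]
    · have h1 := rankone_opNorm_le r hx
      have hA0 : opNorm2 A ≠ 0 := ne_of_gt hApos
      have hx0 : norm2 x ≠ 0 := ne_of_gt hxpos
      have h2 : norm2 r / (opNorm2 A * norm2 x) * opNorm2 A = norm2 r / norm2 x := by
        field_simp
      rw [h2]; exact h1
  · rintro ε ⟨hε, ΔA, hy, hΔ⟩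
    have hrx : r = ΔA.mulVec x := by
      rw [hr, hy, Matrix.add_mulVec]; abel
    have h1 : norm2 r ≤ opNorm2 ΔA * norm2 x := by
      rw [hrx]; exact norm2_mulVec_le ΔA x hx
    have h2 : norm2 r ≤ ε * opNorm2 A * norm2 x :=
      h1.trans (mul_le_mul_of_nonneg_right hΔ (norm2_nonneg x))
    rw [div_le_iff₀ (mul_pos hApos hxpos)]
    linarith [h2]
end

section
/- Normwise backward error of the adaptive-precision partial sum model: suppose for each row i and bucket k, the computed partial sum ŷ_i^{(k)} satisfies ŷ_i^{(k)} = ∑_{j∈B_{ik}} a_{ij}(1+δ_{ijk}) x_j with |δ_{ijk}| ≤ p_{ik} u_k, where p_{ik} = |B_{ik}| and, for k ≥ 2, every j ∈ B_{ik} satisfies |a_{ij}| u_k ≤ ε‖A‖∞; and the final accumulation is exact. Then the computed ŷ satisfies ‖ŷ − Ax‖∞ ≤ (p_{max} u_1 + c ε) ‖A‖∞ ‖x‖∞ for some constant c depending only on max_i ∑_{k≥2} p_{ik}², where p_{max} = max_i p_{i1}. -/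
open Finset

attribute [local instance] Matrix.linftyOpNormedAddCommGroup

/-- Normwise backward error of the adaptive-precision partial sum model with exact
accumulation: if each computed partial sum over bucket `B_{ik}` satisfies
`ŷ_i^{(k)} = ∑_{j∈B_{ik}} a_{ij}(1+δ_{ijk})x_j` with `|δ_{ijk}| ≤ p_{ik} u_k`
(`p_{ik} = |B_{ik}|`), for `k ≥ 2` (0-based `k ≥ 1`) every `j ∈ B_{ik}` satisfies
`|a_{ij}| u_k ≤ ε‖A‖∞`, and the buckets partition the support of each row, then
`‖ŷ − Ax‖∞ ≤ (p_max u_1 + c ε)‖A‖∞‖x‖∞` with `p_max = max_i p_{i1}` and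
`c = max_i ∑_{k≥2} p_{ik}²`. Matrix norm is the induced `∞`-norm, vector norm the
max norm. -/
theorem adaptive_spmv_backward_error (n q : ℕ) (hq : 1 ≤ q)
    (A : Matrix (Fin n) (Fin n) ℝ) (x : Fin n → ℝ)
    (u : Fin q → ℝ) (hu : StrictMono u) (hupos : ∀ k, 0 < u k)
    (ε : ℝ) (hε : 0 ≤ ε)
    (B : Fin n → Fin q → Finset (Fin n))
    (hdisj : ∀ i, ∀ k l : Fin q, k ≠ l → Disjoint (B i k) (B i l))
    (hsupp : ∀ i j, (∀ k : Fin q, j ∉ B i k) → A i j = 0)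
    (hsmall : ∀ i (k : Fin q), 1 ≤ (k : ℕ) → ∀ j ∈ B i k, |A i j| * u k ≤ ε * ‖A‖)
    (δ : Fin n → Fin n → Fin q → ℝ)
    (hδ : ∀ i j (k : Fin q), j ∈ B i k → |δ i j k| ≤ ((B i k).card : ℝ) * u k)
    (yhat : Fin n → ℝ)
    (hyhat : ∀ i, yhat i = ∑ k : Fin q, ∑ j ∈ B i k, A i j * (1 + δ i j k) * x j) :
    ‖yhat - A.mulVec x‖ ≤
      ((↑(Finset.univ.sup fun i : Fin n => (B i ⟨0, hq⟩).card) * u ⟨0, hq⟩ +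
          ↑(Finset.univ.sup fun i : Fin n =>
              ∑ k ∈ Finset.univ.filter (fun k : Fin q => 1 ≤ (k : ℕ)),
                (B i k).card ^ 2) * ε)) * ‖A‖ * ‖x‖ := by
  set k0 : Fin q := ⟨0, hq⟩ with hk0
  set pmax : ℕ := Finset.univ.sup fun i : Fin n => (B i k0).card with hpmax
  set c : ℕ := Finset.univ.sup fun i : Fin n =>
      ∑ k ∈ Finset.univ.filter (fun k : Fin q => 1 ≤ (k : ℕ)), (B i k).card ^ 2 with hc
  have hA0 : (0:ℝ) ≤ ‖A‖ := norm_nonneg _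
  have hx0 : (0:ℝ) ≤ ‖x‖ := norm_nonneg _
  have hu0 : (0:ℝ) ≤ u k0 := (hupos k0).le
  have hrhs : (0:ℝ) ≤ ((pmax : ℝ) * u k0 + (c : ℝ) * ε) * ‖A‖ * ‖x‖ := by positivity
  -- row sum bound
  have hrow : ∀ i, ∑ j, |A i j| ≤ ‖A‖ := by
    intro i
    have h := Matrix.linfty_opNNNorm_def A
    have h2 : (∑ j, ‖A i j‖₊) ≤ ‖A‖₊ := h ▸ Finset.le_sup (f := fun i => ∑ j, ‖A i j‖₊) (Finset.mem_univ i)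
    calc ∑ j, |A i j| = ((∑ j, ‖A i j‖₊ : NNReal) : ℝ) := by
          push_cast [Real.norm_eq_abs] at *
          simp [Real.norm_eq_abs]
      _ ≤ ‖A‖ := by exact_mod_cast h2
  have hxj : ∀ j, |x j| ≤ ‖x‖ := fun j => by
    simpa [Real.norm_eq_abs] using norm_le_pi_norm x j
  rw [pi_norm_le_iff_of_nonneg hrhs]
  intro i
  -- the key identity
  have hsum : ∑ k : Fin q, ∑ j ∈ B i k, A i j * x j = A.mulVec x i := by
    rw [← Finset.sum_biUnion (fun k _ l _ hkl => hdisj i k l hkl)]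
    rw [Matrix.mulVec, dotProduct]
    apply Finset.sum_subset (Finset.subset_univ _)
    intro j _ hj
    have : ∀ k : Fin q, j ∉ B i k := by
      intro k hk
      exact hj (Finset.mem_biUnion.2 ⟨k, Finset.mem_univ k, hk⟩)
    simp [hsupp i j this]
  have herr : yhat i - A.mulVec x i = ∑ k : Fin q, ∑ j ∈ B i k, A i j * δ i j k * x j := by
    rw [hyhat i, ← hsum, ← Finset.sum_sub_distrib]
    congr 1; ext k
    rw [← Finset.sum_sub_distrib]
    congr 1; ext j; ring
  have habs : |yhat i - A.mulVec x i| ≤ ∑ k : Fin q, ∑ j ∈ B i k, |A i j| * |δ i j k| * |x j| := by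
    rw [herr]
    refine (Finset.abs_sum_le_sum_abs _ _).trans (Finset.sum_le_sum fun k _ => ?_)
    refine (Finset.abs_sum_le_sum_abs _ _).trans (Finset.sum_le_sum fun j _ => ?_)
    rw [abs_mul, abs_mul]
  -- split the sum
  have hsplit : ∑ k : Fin q, ∑ j ∈ B i k, |A i j| * |δ i j k| * |x j|
      = (∑ j ∈ B i k0, |A i j| * |δ i j k0| * |x j|)
        + ∑ k ∈ Finset.univ.filter (fun k : Fin q => 1 ≤ (k : ℕ)),
            ∑ j ∈ B i k, |A i j| * |δ i j k| * |x j| := by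
    rw [← Finset.sum_filter_add_sum_filter_not Finset.univ (fun k : Fin q => 1 ≤ (k : ℕ))]
    rw [add_comm]
    congr 1
    have : Finset.univ.filter (fun k : Fin q => ¬ 1 ≤ (k : ℕ)) = {k0} := by
      ext k
      simp only [Finset.mem_filter, Finset.mem_univ, true_and, Finset.mem_singleton, not_le,
        Nat.lt_one_iff]
      constructor
      · intro h; exact Fin.ext h
      · intro h; simp [h, hk0]
    rw [this, Finset.sum_singleton]
  -- bound first part
  have h1 : ∑ j ∈ B i k0, |A i j| * |δ i j k0| * |x j| ≤ (pmax : ℝ) * u k0 * ‖A‖ * ‖x‖ := by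
    have hcard : ((B i k0).card : ℝ) ≤ (pmax : ℝ) := by
      exact_mod_cast Finset.le_sup (f := fun i : Fin n => (B i k0).card) (Finset.mem_univ i)
    calc ∑ j ∈ B i k0, |A i j| * |δ i j k0| * |x j|
        ≤ ∑ j ∈ B i k0, |A i j| * ((pmax : ℝ) * u k0) * ‖x‖ := by
          refine Finset.sum_le_sum fun j hj => ?_
          have h1 := (hδ i j k0 hj).trans (by
            exact mul_le_mul_of_nonneg_right hcard hu0)
          exact mul_le_mul (mul_le_mul_of_nonneg_left h1 (abs_nonneg _)) (hxj j)
            (abs_nonneg _) (by positivity)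
      _ = (∑ j ∈ B i k0, |A i j|) * ((pmax : ℝ) * u k0) * ‖x‖ := by
          rw [Finset.sum_mul, Finset.sum_mul]
      _ ≤ ‖A‖ * ((pmax : ℝ) * u k0) * ‖x‖ := by
          have : ∑ j ∈ B i k0, |A i j| ≤ ‖A‖ :=
            le_trans (Finset.sum_le_sum_of_subset_of_nonneg (Finset.subset_univ _)
              (fun j _ _ => abs_nonneg _)) (hrow i)
          exact mul_le_mul_of_nonneg_right (mul_le_mul_of_nonneg_right this (by positivity)) hx0
      _ = (pmax : ℝ) * u k0 * ‖A‖ * ‖x‖ := by ring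
  -- bound second part
  have h2 : ∑ k ∈ Finset.univ.filter (fun k : Fin q => 1 ≤ (k : ℕ)),
        ∑ j ∈ B i k, |A i j| * |δ i j k| * |x j| ≤ (c : ℝ) * ε * ‖A‖ * ‖x‖ := by
    have step : ∀ k ∈ Finset.univ.filter (fun k : Fin q => 1 ≤ (k : ℕ)),
        ∑ j ∈ B i k, |A i j| * |δ i j k| * |x j|
          ≤ (((B i k).card : ℝ)^2 * ε) * ‖A‖ * ‖x‖ := by
      intro k hk
      have hk1 : 1 ≤ (k : ℕ) := (Finset.mem_filter.1 hk).2
      calc ∑ j ∈ B i k, |A i j| * |δ i j k| * |x j|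
          ≤ ∑ j ∈ B i k, (((B i k).card : ℝ) * (ε * ‖A‖)) * ‖x‖ := by
            refine Finset.sum_le_sum fun j hj => ?_
            have hAd : |A i j| * |δ i j k| ≤ ((B i k).card : ℝ) * (ε * ‖A‖) := by
              calc |A i j| * |δ i j k| ≤ |A i j| * (((B i k).card : ℝ) * u k) :=
                    mul_le_mul_of_nonneg_left (hδ i j k hj) (abs_nonneg _)
                _ = ((B i k).card : ℝ) * (|A i j| * u k) := by ring
                _ ≤ ((B i k).card : ℝ) * (ε * ‖A‖) :=
                    mul_le_mul_of_nonneg_left (hsmall i k hk1 j hj) (Nat.cast_nonneg _)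
            exact mul_le_mul hAd (hxj j) (abs_nonneg _) (by positivity)
        _ = (((B i k).card : ℝ)^2 * ε) * ‖A‖ * ‖x‖ := by
            rw [Finset.sum_const, nsmul_eq_mul]; ring
    calc ∑ k ∈ Finset.univ.filter (fun k : Fin q => 1 ≤ (k : ℕ)),
          ∑ j ∈ B i k, |A i j| * |δ i j k| * |x j|
        ≤ ∑ k ∈ Finset.univ.filter (fun k : Fin q => 1 ≤ (k : ℕ)),
            (((B i k).card : ℝ)^2 * ε) * ‖A‖ * ‖x‖ := Finset.sum_le_sum step
      _ = (∑ k ∈ Finset.univ.filter (fun k : Fin q => 1 ≤ (k : ℕ)),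
            ((B i k).card : ℝ)^2) * ε * ‖A‖ * ‖x‖ := by
          rw [Finset.sum_mul, Finset.sum_mul, Finset.sum_mul]
      _ ≤ (c : ℝ) * ε * ‖A‖ * ‖x‖ := by
          have hle : (∑ k ∈ Finset.univ.filter (fun k : Fin q => 1 ≤ (k : ℕ)),
              ((B i k).card : ℝ)^2) ≤ (c : ℝ) := by
            push_cast
            exact_mod_cast Finset.le_sup (f := fun i : Fin n =>
              ∑ k ∈ Finset.univ.filter (fun k : Fin q => 1 ≤ (k : ℕ)), (B i k).card ^ 2)
              (Finset.mem_univ i)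
          have := mul_le_mul_of_nonneg_right (mul_le_mul_of_nonneg_right
            (mul_le_mul_of_nonneg_right hle hε) hA0) hx0
          linarith
  calc ‖(yhat - A.mulVec x) i‖ = |yhat i - A.mulVec x i| := by
        simp [Real.norm_eq_abs]
    _ ≤ _ := habs
    _ = _ := hsplit
    _ ≤ (pmax : ℝ) * u k0 * ‖A‖ * ‖x‖ + (c : ℝ) * ε * ‖A‖ * ‖x‖ := add_le_add h1 h2
    _ = ((pmax : ℝ) * u k0 + (c : ℝ) * ε) * ‖A‖ * ‖x‖ := by ring
end
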